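/- Let 𝓛_x = (6/(y−x))∂_x + (2/(y−x))∂_y + Σ_i (2/(z_i−x))∂_i and 𝓛_y = (6/(x−y))∂_y + (2/(x−y))∂_x + Σ_i (2/(z_i−y))∂_i (the generators of SLE_0(−6), i.e. of hyperbolic geodesics). Then [𝓛_x, 𝓛_y] = (4/(x−y)²)(𝓛_y − 𝓛_x) as operators on smooth functions of (x, y, z_1, …, z_n) on the domain where all these points are distinct. -/

import Mathlib

open scoped BigOperators

/-- Configurations `(x, y, z₁, …, z_n)`. -/
abbrev Config (n : ℕ) := ℝ × ℝ × (Fin n → ℝ)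

/-- The set of configurations with pairwise distinct points. -/
def distinctConfig (n : ℕ) : Set (Config n) :=
  {p | p.1 ≠ p.2.1 ∧ (∀ i, p.2.2 i ≠ p.1) ∧ (∀ i, p.2.2 i ≠ p.2.1) ∧
    ∀ i j, i ≠ j → p.2.2 i ≠ p.2.2 j}

/-- `∂ₓ`. -/
noncomputable def Dx (n : ℕ) (F : Config n → ℝ) : Config n → ℝ :=
  fun p => deriv (fun u => F (u, p.2.1, p.2.2)) p.1

/-- `∂_y`. -/
noncomputable def Dy (n : ℕ) (F : Config n → ℝ) : Config n → ℝ :=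
  fun p => deriv (fun u => F (p.1, u, p.2.2)) p.2.1

/-- `∂_{z_i}`. -/
noncomputable def Dz (n : ℕ) (i : Fin n) (F : Config n → ℝ) : Config n → ℝ :=
  fun p => deriv (fun u => F (p.1, p.2.1, Function.update p.2.2 i u)) (p.2.2 i)

/-- `𝓛ₓ = (6/(y−x))∂ₓ + (2/(y−x))∂_y + Σᵢ (2/(zᵢ−x))∂ᵢ`, the generator of the
hyperbolic geodesic (SLE₀(−6)) growing at `x`. -/
noncomputable def geodGenX (n : ℕ) (F : Config n → ℝ) : Config n → ℝ :=
  fun p => 6 / (p.2.1 - p.1) * Dx n F p + 2 / (p.2.1 - p.1) * Dy n F p +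
    ∑ i, 2 / (p.2.2 i - p.1) * Dz n i F p

/-- `𝓛_y = (6/(x−y))∂_y + (2/(x−y))∂ₓ + Σᵢ (2/(zᵢ−y))∂ᵢ`. -/
noncomputable def geodGenY (n : ℕ) (F : Config n → ℝ) : Config n → ℝ :=
  fun p => 6 / (p.1 - p.2.1) * Dy n F p + 2 / (p.1 - p.2.1) * Dx n F p +
    ∑ i, 2 / (p.2.2 i - p.2.1) * Dz n i F p

/-! ### Auxiliary material -/

section Aux

variable {n : ℕ}

/-- Basis vector in the `x` direction. -/
def eX (n : ℕ) : Config n := (1, 0, 0)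

/-- Basis vector in the `y` direction. -/
def eY (n : ℕ) : Config n := (0, 1, 0)

/-- Basis vector in the `z i` direction. -/
def eZ (n : ℕ) (i : Fin n) : Config n := (0, 0, Pi.single i 1)

/-- Projection on `x`. -/
noncomputable def px (n : ℕ) : Config n →L[ℝ] ℝ :=
  ContinuousLinearMap.fst ℝ ℝ (ℝ × (Fin n → ℝ))

/-- Projection on `y`. -/
noncomputable def py (n : ℕ) : Config n →L[ℝ] ℝ :=
  (ContinuousLinearMap.fst ℝ ℝ (Fin n → ℝ)).comp
    (ContinuousLinearMap.snd ℝ ℝ (ℝ × (Fin n → ℝ)))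

/-- Projection on `z i`. -/
noncomputable def pz (n : ℕ) (i : Fin n) : Config n →L[ℝ] ℝ :=
  (ContinuousLinearMap.proj i).comp
    ((ContinuousLinearMap.snd ℝ ℝ (Fin n → ℝ)).comp
      (ContinuousLinearMap.snd ℝ ℝ (ℝ × (Fin n → ℝ))))

@[simp] lemma px_apply (q : Config n) : px n q = q.1 := rfl
@[simp] lemma py_apply (q : Config n) : py n q = q.2.1 := rfl
@[simp] lemma pz_apply (i : Fin n) (q : Config n) : pz n i q = q.2.2 i := rfl

/-- The coefficient vector of `𝓛ₓ`. -/
noncomputable def vA (n : ℕ) (p : Config n) : Config n :=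
  (6 / (p.2.1 - p.1), 2 / (p.2.1 - p.1), fun i => 2 / (p.2.2 i - p.1))

/-- The coefficient vector of `𝓛_y`. -/
noncomputable def vB (n : ℕ) (p : Config n) : Config n :=
  (2 / (p.1 - p.2.1), 6 / (p.1 - p.2.1), fun i => 2 / (p.2.2 i - p.2.1))

/-- The derivative of `vA` at `p`. -/
noncomputable def dA (n : ℕ) (p : Config n) : Config n →L[ℝ] Config n :=
  ((-(6 / (p.2.1 - p.1) ^ 2)) • (py n - px n)).prod
    (((-(2 / (p.2.1 - p.1) ^ 2)) • (py n - px n)).prod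
      (ContinuousLinearMap.pi fun i => (-(2 / (p.2.2 i - p.1) ^ 2)) • (pz n i - px n)))

/-- The derivative of `vB` at `p`. -/
noncomputable def dB (n : ℕ) (p : Config n) : Config n →L[ℝ] Config n :=
  ((-(2 / (p.1 - p.2.1) ^ 2)) • (px n - py n)).prod
    (((-(6 / (p.1 - p.2.1) ^ 2)) • (px n - py n)).prod
      (ContinuousLinearMap.pi fun i => (-(2 / (p.2.2 i - p.2.1) ^ 2)) • (pz n i - py n)))

lemma hasFDerivAt_cdiv (c : ℝ) (L M : Config n →L[ℝ] ℝ) (p : Config n)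
    (h : L p - M p ≠ 0) :
    HasFDerivAt (fun q => c / (L q - M q)) ((-(c / (L p - M p) ^ 2)) • (L - M)) p := by
  have hsub : HasFDerivAt (fun q : Config n => L q - M q) (L - M) p :=
    L.hasFDerivAt.sub M.hasFDerivAt
  have hg : HasDerivAt (fun t : ℝ => c / t) (-(c / (L p - M p) ^ 2)) (L p - M p) := by
    have h1 := (hasDerivAt_inv h).const_mul c
    have h2 : c * -((L p - M p) ^ 2)⁻¹ = -(c / (L p - M p) ^ 2) := by
      field_simp
    rw [h2] at h1
    simpa [div_eq_mul_inv] using h1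
  exact hg.comp_hasFDerivAt p hsub

lemma hasFDerivAt_vA (p : Config n) (hxy : p.2.1 - p.1 ≠ 0)
    (hz : ∀ i, p.2.2 i - p.1 ≠ 0) : HasFDerivAt (vA n) (dA n p) p := by
  have h1 := hasFDerivAt_cdiv (n := n) 6 (py n) (px n) p (by simpa using hxy)
  have h2 := hasFDerivAt_cdiv (n := n) 2 (py n) (px n) p (by simpa using hxy)
  have h3 : ∀ i, HasFDerivAt (fun q : Config n => 2 / (q.2.2 i - q.1))
      ((-(2 / (p.2.2 i - p.1) ^ 2)) • (pz n i - px n)) p := fun i => by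
    simpa using hasFDerivAt_cdiv (n := n) 2 (pz n i) (px n) p (by simpa using hz i)
  have h3' : HasFDerivAt (fun q : Config n => fun i => 2 / (q.2.2 i - q.1))
      (ContinuousLinearMap.pi fun i => (-(2 / (p.2.2 i - p.1) ^ 2)) • (pz n i - px n)) p :=
    hasFDerivAt_pi.2 h3
  exact (h1.prodMk (h2.prodMk h3'))

lemma hasFDerivAt_vB (p : Config n) (hxy : p.1 - p.2.1 ≠ 0)
    (hz : ∀ i, p.2.2 i - p.2.1 ≠ 0) : HasFDerivAt (vB n) (dB n p) p := by
  have h1 := hasFDerivAt_cdiv (n := n) 2 (px n) (py n) p (by simpa using hxy)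
  have h2 := hasFDerivAt_cdiv (n := n) 6 (px n) (py n) p (by simpa using hxy)
  have h3 : ∀ i, HasFDerivAt (fun q : Config n => 2 / (q.2.2 i - q.2.1))
      ((-(2 / (p.2.2 i - p.2.1) ^ 2)) • (pz n i - py n)) p := fun i => by
    simpa using hasFDerivAt_cdiv (n := n) 2 (pz n i) (py n) p (by simpa using hz i)
  have h3' : HasFDerivAt (fun q : Config n => fun i => 2 / (q.2.2 i - q.2.1))
      (ContinuousLinearMap.pi fun i => (-(2 / (p.2.2 i - p.2.1) ^ 2)) • (pz n i - py n)) p :=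
    hasFDerivAt_pi.2 h3
  exact (h1.prodMk (h2.prodMk h3'))

lemma Dx_eq {F : Config n → ℝ} {p : Config n} (hF : DifferentiableAt ℝ F p) :
    Dx n F p = fderiv ℝ F p (eX n) := by
  have hline : HasDerivAt (fun u : ℝ => ((u, p.2.1, p.2.2) : Config n)) (eX n) p.1 :=
    (hasDerivAt_id p.1).prodMk ((hasDerivAt_const _ _).prodMk (hasDerivAt_const _ _))
  have := hF.hasFDerivAt.comp_hasDerivAt p.1 hline
  exact this.deriv

lemma Dy_eq {F : Config n → ℝ} {p : Config n} (hF : DifferentiableAt ℝ F p) :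
    Dy n F p = fderiv ℝ F p (eY n) := by
  have hline : HasDerivAt (fun u : ℝ => ((p.1, u, p.2.2) : Config n)) (eY n) p.2.1 :=
    (hasDerivAt_const _ _).prodMk ((hasDerivAt_id p.2.1).prodMk (hasDerivAt_const _ _))
  have := hF.hasFDerivAt.comp_hasDerivAt p.2.1 hline
  exact this.deriv

lemma Dz_eq {F : Config n → ℝ} {p : Config n} (hF : DifferentiableAt ℝ F p) (i : Fin n) :
    Dz n i F p = fderiv ℝ F p (eZ n i) := by
  have hupd : HasDerivAt (fun u : ℝ => Function.update p.2.2 i u) (Pi.single i 1) (p.2.2 i) := by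
    rw [hasDerivAt_pi]
    intro j
    rcases eq_or_ne j i with h | h
    · subst h
      simpa [Function.update_apply] using hasDerivAt_id' (x := p.2.2 j)
    · simpa [Function.update_apply, h, Pi.single_eq_of_ne h] using
        hasDerivAt_const (p.2.2 i) (p.2.2 j)
  have hline : HasDerivAt (fun u : ℝ => ((p.1, p.2.1, Function.update p.2.2 i u) : Config n))
      (eZ n i) (p.2.2 i) :=
    (hasDerivAt_const _ _).prodMk ((hasDerivAt_const _ _).prodMk hupd)
  have hF' : HasFDerivAt F (fderiv ℝ F p) (p.1, p.2.1, Function.update p.2.2 i (p.2.2 i)) := by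
    rw [Function.update_eq_self]
    exact hF.hasFDerivAt
  have := hF'.comp_hasDerivAt (p.2.2 i) hline
  exact this.deriv

lemma vec_decomp (a b : ℝ) (f : Fin n → ℝ) :
    ((a, b, f) : Config n) = a • eX n + b • eY n + ∑ i, f i • eZ n i := by
  refine Prod.ext ?_ (Prod.ext ?_ ?_)
  · simp [Prod.fst_sum, eX, eY, eZ]
  · simp [Prod.fst_sum, Prod.snd_sum, eX, eY, eZ]
  · show f = _
    funext j
    simp [Prod.snd_sum, Finset.sum_apply, eX, eY, eZ, Pi.single_apply]

lemma geodGenX_eq {F : Config n → ℝ} {p : Config n} (hF : DifferentiableAt ℝ F p) :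
    geodGenX n F p = fderiv ℝ F p (vA n p) := by
  have hz : ∀ i : Fin n, Dz n i F p = fderiv ℝ F p (eZ n i) := Dz_eq hF
  rw [show vA n p = (6 / (p.2.1 - p.1)) • eX n + (2 / (p.2.1 - p.1)) • eY n +
      ∑ i, (2 / (p.2.2 i - p.1)) • eZ n i from vec_decomp _ _ _]
  rw [map_add, map_add, map_smul, map_smul, map_sum]
  simp only [geodGenX, Dx_eq hF, Dy_eq hF, map_smul, smul_eq_mul, hz]

lemma geodGenY_eq {F : Config n → ℝ} {p : Config n} (hF : DifferentiableAt ℝ F p) :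
    geodGenY n F p = fderiv ℝ F p (vB n p) := by
  have hz : ∀ i : Fin n, Dz n i F p = fderiv ℝ F p (eZ n i) := Dz_eq hF
  rw [show vB n p = (2 / (p.1 - p.2.1)) • eX n + (6 / (p.1 - p.2.1)) • eY n +
      ∑ i, (2 / (p.2.2 i - p.2.1)) • eZ n i from vec_decomp _ _ _]
  rw [map_add, map_add, map_smul, map_smul, map_sum]
  simp only [geodGenY, Dx_eq hF, Dy_eq hF, map_smul, smul_eq_mul, hz]
  ring

lemma Dx_congr {G H : Config n → ℝ} {p : Config n} (h : G =ᶠ[nhds p] H) :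
    Dx n G p = Dx n H p := by
  have hc : Filter.Tendsto (fun u : ℝ => ((u, p.2.1, p.2.2) : Config n)) (nhds p.1) (nhds p) := by
    have : Continuous (fun u : ℝ => ((u, p.2.1, p.2.2) : Config n)) := by continuity
    simpa using this.tendsto p.1
  exact (h.comp_tendsto hc).deriv_eq

lemma Dy_congr {G H : Config n → ℝ} {p : Config n} (h : G =ᶠ[nhds p] H) :
    Dy n G p = Dy n H p := by
  have hc : Filter.Tendsto (fun u : ℝ => ((p.1, u, p.2.2) : Config n)) (nhds p.2.1) (nhds p) := by
    have : Continuous (fun u : ℝ => ((p.1, u, p.2.2) : Config n)) := by continuity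
    simpa using this.tendsto p.2.1
  exact (h.comp_tendsto hc).deriv_eq

lemma Dz_congr {G H : Config n → ℝ} {p : Config n} (i : Fin n) (h : G =ᶠ[nhds p] H) :
    Dz n i G p = Dz n i H p := by
  have hcont : Continuous (fun u : ℝ => ((p.1, p.2.1, Function.update p.2.2 i u) : Config n)) := by
    refine continuous_const.prodMk (continuous_const.prodMk ?_)
    exact continuous_pi fun j => by
      rcases eq_or_ne j i with hji | hji
      · subst hji; simpa [Function.update_apply] using continuous_id'
      · simpa [Function.update_apply, hji] using continuous_const
  have hc : Filter.Tendsto (fun u : ℝ => ((p.1, p.2.1, Function.update p.2.2 i u) : Config n))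
      (nhds (p.2.2 i)) (nhds p) := by
    have := hcont.tendsto (p.2.2 i)
    simpa [Function.update_eq_self] using this
  exact (h.comp_tendsto hc).deriv_eq

lemma geodGenX_congr {G H : Config n → ℝ} {p : Config n} (h : G =ᶠ[nhds p] H) :
    geodGenX n G p = geodGenX n H p := by
  rw [geodGenX, geodGenX, Dx_congr h, Dy_congr h]
  congr 1
  exact Finset.sum_congr rfl fun i _ => by rw [Dz_congr i h]

lemma geodGenY_congr {G H : Config n → ℝ} {p : Config n} (h : G =ᶠ[nhds p] H) :
    geodGenY n G p = geodGenY n H p := by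
  rw [geodGenY, geodGenY, Dx_congr h, Dy_congr h]
  congr 1
  exact Finset.sum_congr rfl fun i _ => by rw [Dz_congr i h]

lemma isOpen_distinctConfig (n : ℕ) : IsOpen (distinctConfig n) := by
  have hx : Continuous fun p : Config n => p.1 := continuous_fst
  have hy : Continuous fun p : Config n => p.2.1 := continuous_fst.comp continuous_snd
  have hz : ∀ i, Continuous fun p : Config n => p.2.2 i := fun i =>
    (continuous_apply i).comp (continuous_snd.comp continuous_snd)
  have : distinctConfig n = {p : Config n | p.1 ≠ p.2.1} ∩
      ((⋂ i, {p : Config n | p.2.2 i ≠ p.1}) ∩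
        ((⋂ i, {p : Config n | p.2.2 i ≠ p.2.1}) ∩
          ⋂ i, ⋂ j, ⋂ _h : i ≠ j, {p : Config n | p.2.2 i ≠ p.2.2 j})) := by
    ext q
    simp only [distinctConfig, Set.mem_setOf_eq, Set.mem_inter_iff, Set.mem_iInter]
  rw [this]
  refine (isOpen_ne_fun hx hy).inter (IsOpen.inter ?_ (IsOpen.inter ?_ ?_))
  · exact isOpen_iInter_of_finite fun i => isOpen_ne_fun (hz i) hx
  · exact isOpen_iInter_of_finite fun i => isOpen_ne_fun (hz i) hy
  · exact isOpen_iInter_of_finite fun i => isOpen_iInter_of_finite fun j =>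
      isOpen_iInter_of_finite fun _ => isOpen_ne_fun (hz i) (hz j)

lemma commutator_vector (p : Config n) (hxy : p.1 ≠ p.2.1)
    (hzx : ∀ i, p.2.2 i ≠ p.1) (hzy : ∀ i, p.2.2 i ≠ p.2.1) :
    dB n p (vA n p) - dA n p (vB n p) =
      (4 / (p.1 - p.2.1) ^ 2) • (vB n p - vA n p) := by
  obtain ⟨x, y, z⟩ := p
  simp only at hxy hzx hzy
  have hxy' : x - y ≠ 0 := sub_ne_zero.2 hxy
  have hyx' : y - x ≠ 0 := sub_ne_zero.2 (Ne.symm hxy)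
  refine Prod.ext ?_ (Prod.ext ?_ ?_)
  · simp only [dA, dB, vA, vB, ContinuousLinearMap.prod_apply, Prod.fst_sub, Prod.smul_fst,
      ContinuousLinearMap.smul_apply, ContinuousLinearMap.sub_apply, px_apply, py_apply,
      pz_apply, smul_eq_mul]
    field_simp
    ring
  · simp only [dA, dB, vA, vB, ContinuousLinearMap.prod_apply, Prod.snd_sub, Prod.fst_sub,
      Prod.smul_snd, Prod.smul_fst, ContinuousLinearMap.smul_apply,
      ContinuousLinearMap.sub_apply, px_apply, py_apply, pz_apply, smul_eq_mul]
    field_simp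
    ring
  · funext i
    have hzx' : z i - x ≠ 0 := sub_ne_zero.2 (hzx i)
    have hzy' : z i - y ≠ 0 := sub_ne_zero.2 (hzy i)
    simp only [dA, dB, vA, vB, ContinuousLinearMap.prod_apply, Prod.snd_sub, Prod.smul_snd,
      ContinuousLinearMap.pi_apply, ContinuousLinearMap.smul_apply,
      ContinuousLinearMap.sub_apply, px_apply, py_apply, pz_apply, smul_eq_mul, Pi.sub_apply,
      Pi.smul_apply]
    field_simp
    ring

end Aux

/-- Commutation relation `[𝓛ₓ,𝓛_y] = (4/(x−y)²)(𝓛_y − 𝓛ₓ)` for the SLE₀(−6) generators. -/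
theorem geodesic_generators_commutation (n : ℕ)
    (F : Config n → ℝ) (hF : ContDiffOn ℝ (⊤ : ℕ∞) F (distinctConfig n))
    (p : Config n) (hp : p ∈ distinctConfig n) :
    geodGenX n (geodGenY n F) p - geodGenY n (geodGenX n F) p =
      4 / (p.1 - p.2.1) ^ 2 * (geodGenY n F p - geodGenX n F p) := by
  obtain ⟨hxy, hzx, hzy, hzz⟩ := hp
  have hp' : p ∈ distinctConfig n := ⟨hxy, hzx, hzy, hzz⟩
  have hU := isOpen_distinctConfig n
  have hmem : distinctConfig n ∈ nhds p := hU.mem_nhds hp'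
  have hdF : ∀ q ∈ distinctConfig n, DifferentiableAt ℝ F q := fun q hq =>
    (hF.contDiffAt (hU.mem_nhds hq)).differentiableAt (by simp)
  have hd2 : ContDiffAt ℝ 2 F p := (hF.contDiffAt hmem).of_le (WithTop.coe_le_coe.2 (le_top : (2 : ℕ∞) ≤ ⊤))
  have hf'd : HasFDerivAt (fderiv ℝ F) (fderiv ℝ (fderiv ℝ F) p) p := by
    have h1 : ContDiffAt ℝ 1 (fderiv ℝ F) p :=
      (hF.contDiffAt hmem).fderiv_right (m := 1) (WithTop.coe_le_coe.2 le_top)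
    exact (h1.differentiableAt one_ne_zero).hasFDerivAt
  have hsymm : IsSymmSndFDerivAt ℝ F p := hd2.isSymmSndFDerivAt (by simp [minSmoothness_of_isRCLikeNormedField])
  have hAd : HasFDerivAt (vA n) (dA n p) p :=
    hasFDerivAt_vA p (sub_ne_zero.2 (Ne.symm hxy)) fun i => sub_ne_zero.2 (hzx i)
  have hBd : HasFDerivAt (vB n) (dB n p) p :=
    hasFDerivAt_vB p (sub_ne_zero.2 hxy) fun i => sub_ne_zero.2 (hzy i)
  set GY : Config n → ℝ := fun q => fderiv ℝ F q (vB n q) with hGY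
  set GX : Config n → ℝ := fun q => fderiv ℝ F q (vA n q) with hGX
  have hGYd : HasFDerivAt GY
      ((fderiv ℝ F p).comp (dB n p) + (fderiv ℝ (fderiv ℝ F) p).flip (vB n p)) p :=
    hf'd.clm_apply hBd
  have hGXd : HasFDerivAt GX
      ((fderiv ℝ F p).comp (dA n p) + (fderiv ℝ (fderiv ℝ F) p).flip (vA n p)) p :=
    hf'd.clm_apply hAd
  have heqY : geodGenY n F =ᶠ[nhds p] GY := by
    filter_upwards [hmem] with q hq
    exact geodGenY_eq (hdF q hq)
  have heqX : geodGenX n F =ᶠ[nhds p] GX := by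
    filter_upwards [hmem] with q hq
    exact geodGenX_eq (hdF q hq)
  have h1 : geodGenX n (geodGenY n F) p =
      fderiv ℝ F p (dB n p (vA n p)) +
        fderiv ℝ (fderiv ℝ F) p (vA n p) (vB n p) := by
    rw [geodGenX_congr heqY, geodGenX_eq hGYd.differentiableAt, hGYd.fderiv]
    simp
  have h2 : geodGenY n (geodGenX n F) p =
      fderiv ℝ F p (dA n p (vB n p)) +
        fderiv ℝ (fderiv ℝ F) p (vB n p) (vA n p) := by
    rw [geodGenY_congr heqX, geodGenY_eq hGXd.differentiableAt, hGXd.fderiv]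
    simp
  rw [h1, h2, hsymm.eq (vA n p) (vB n p)]
  have h3 : fderiv ℝ F p (dB n p (vA n p)) - fderiv ℝ F p (dA n p (vB n p)) =
      4 / (p.1 - p.2.1) ^ 2 * (geodGenY n F p - geodGenX n F p) := by
    rw [← map_sub, commutator_vector p hxy hzx hzy, map_smul, smul_eq_mul, map_sub,
      geodGenY_eq (hdF p hp'), geodGenX_eq (hdF p hp')]
  linarith [h3]
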